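/- arXiv:1607.07068 — 5 statements merged into one kernel-verified Lean document; each statement's English description precedes it below -/
import Mathlib

section
/- Let ξ > 0, M ≥ 0 be reals, let G be a bipartite graph with parts X and Y, and let f : Y → [0, M]. Suppose G is ξ-poor, i.e., at most ξ·|Y| vertices y ∈ Y have more than (1/4 + ξ)·|X|·|Y| two-edge walks of G starting at y (a two-edge walk from y is a pair (x, y') with x adjacent to both y and y', where y' = y is allowed). Define a ≥ 0 by ∑_{y∈Y} f(y)² = |Y|·a², and define g : X → ℝ by g(x) = ∑_{y ∈ N(x)} f(y). Then ∑_{x∈X} g(x)² ≤ ((1/4 + ξ)·a² + ξ·M²)·|X|·|Y|². -/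
/-
Cauchy–Schwarz on each neighbourhood gives `g(x)² ≤ deg(x) · ∑_{y ∈ N(x)} f(y)²`; summing over `x`
and exchanging the sums, `∑ g² ≤ ∑_y f(y)² · w(y)`, where `w(y)` is the number of two-edge walks
from `y`. Vertices with `w(y) ≤ (1/4 + ξ)|X||Y|` contribute at most `(1/4 + ξ)|X||Y| · |Y| a²`; the
at most `ξ|Y|` others each contribute at most `M² · |X||Y|`, since `w(y) ≤ |X||Y|` always.
-/

open Finset

namespace BipartiteRel

variable {X Y : Type*} [Fintype X] [Fintype Y] (A : X → Y → Prop) [∀ x, DecidablePred (A x)]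

noncomputable def twoEdgeWalks (y : Y) : ℝ :=
  ∑ x ∈ univ.filter (fun x => A x y), ((univ.filter (A x)).card : ℝ)

lemma twoEdgeWalks_le_card_mul_card (y : Y) :
    twoEdgeWalks A y ≤ Fintype.card X * Fintype.card Y :=
  calc twoEdgeWalks A y ≤ ∑ _x ∈ univ.filter (fun x => A x y), (Fintype.card Y : ℝ) :=
        sum_le_sum fun x _ => by exact_mod_cast card_le_univ _
    _ = (univ.filter (fun x => A x y)).card * Fintype.card Y := by
        rw [sum_const, nsmul_eq_mul]
    _ ≤ Fintype.card X * Fintype.card Y := by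
        gcongr; exact_mod_cast card_le_univ _

lemma sum_sq_sum_nbhd_le_sum_sq_mul_twoEdgeWalks (f : Y → ℝ) :
    ∑ x, (∑ y ∈ univ.filter (A x), f y) ^ 2 ≤ ∑ y, f y ^ 2 * twoEdgeWalks A y :=
  calc ∑ x, (∑ y ∈ univ.filter (A x), f y) ^ 2
      ≤ ∑ x, ∑ y ∈ univ.filter (A x), ((univ.filter (A x)).card : ℝ) * f y ^ 2 := by
        gcongr with x
        rw [← mul_sum]
        exact sq_sum_le_card_mul_sum_sq
    _ = ∑ y, f y ^ 2 * twoEdgeWalks A y := by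
        simp only [twoEdgeWalks, mul_sum, sum_filter]
        rw [sum_comm]
        refine sum_congr rfl fun y _ => sum_congr rfl fun x _ => ?_
        split_ifs <;> ring

end BipartiteRel

lemma sum_mul_le_add_card_filter_lt {ι : Type*} (s : Finset ι) (u w : ι → ℝ) {c K B : ℝ}
    (hc : 0 ≤ c) (hu : ∀ i ∈ s, 0 ≤ u i) (huK : ∀ i ∈ s, u i ≤ K) (hwB : ∀ i ∈ s, w i ≤ B) :
    ∑ i ∈ s, u i * w i ≤ c * ∑ i ∈ s, u i + (s.filter (fun i => c < w i)).card * (K * B) := by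
  rw [← sum_filter_add_sum_filter_not s (fun i => c < w i)]
  have hlow : ∑ i ∈ s.filter (fun i => ¬ c < w i), u i * w i ≤ c * ∑ i ∈ s, u i :=
    calc ∑ i ∈ s.filter (fun i => ¬ c < w i), u i * w i
        ≤ ∑ i ∈ s.filter (fun i => ¬ c < w i), c * u i := by
          refine sum_le_sum fun i hi => ?_
          rw [mem_filter, not_lt] at hi
          nlinarith [hu i hi.1]
      _ ≤ ∑ i ∈ s, c * u i :=
          sum_le_sum_of_subset_of_nonneg (filter_subset _ _)
            fun i hi _ => mul_nonneg hc (hu i hi)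
      _ = c * ∑ i ∈ s, u i := (mul_sum _ _ _).symm
  have hhigh : ∑ i ∈ s.filter (fun i => c < w i), u i * w i
      ≤ (s.filter (fun i => c < w i)).card * (K * B) := by
    rw [← nsmul_eq_mul]
    refine sum_le_card_nsmul _ _ _ fun i hi => ?_
    rw [mem_filter] at hi
    have hB : 0 ≤ B := hc.trans (hi.2.le.trans (hwB i hi.1))
    calc u i * w i ≤ u i * B := mul_le_mul_of_nonneg_left (hwB i hi.1) (hu i hi.1)
      _ ≤ K * B := mul_le_mul_of_nonneg_right (huK i hi.1) hB
  linarith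

open BipartiteRel in
theorem stmt_0_general {X Y : Type*} [Fintype X] [Fintype Y]
    (A : X → Y → Prop) [∀ x, DecidablePred (A x)]
    (ξ M : ℝ) (hξ : 0 < ξ)
    (f : Y → ℝ) (hf : ∀ y, f y ∈ Set.Icc (0 : ℝ) M)
    (a : ℝ)
    (haa : ∑ y : Y, (f y) ^ 2 = (Fintype.card Y : ℝ) * a ^ 2)
    -- `G` is ξ-poor: at most ξ|Y| vertices `y ∈ Y` admit more than (1/4+ξ)|X||Y|
    -- two-edge walks starting at `y`
    (hpoor :
      ((Finset.univ.filter (fun y : Y =>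
          ((1/4 + ξ) * (Fintype.card X : ℝ) * (Fintype.card Y : ℝ)) <
            ∑ x ∈ Finset.univ.filter (fun x : X => A x y),
              ((Finset.univ.filter (fun y' : Y => A x y')).card : ℝ))).card : ℝ)
        ≤ ξ * (Fintype.card Y : ℝ)) :
    ∑ x : X, (∑ y ∈ Finset.univ.filter (fun y : Y => A x y), f y) ^ 2
      ≤ ((1/4 + ξ) * a ^ 2 + ξ * M ^ 2) * (Fintype.card X : ℝ) *
          (Fintype.card Y : ℝ) ^ 2 := by
  set nX : ℝ := (Fintype.card X : ℝ)
  set nY : ℝ := (Fintype.card Y : ℝ)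
  have hsplit := sum_mul_le_add_card_filter_lt univ (fun y => f y ^ 2) (twoEdgeWalks A)
    (c := (1/4 + ξ) * nX * nY) (K := M ^ 2) (by positivity) (fun y _ => sq_nonneg (f y))
    (fun y _ => pow_le_pow_left₀ (hf y).1 (hf y).2 2)
    (fun y _ => twoEdgeWalks_le_card_mul_card A y)
  have hbad : ((univ.filter fun y => (1/4 + ξ) * nX * nY < twoEdgeWalks A y).card : ℝ)
      * (M ^ 2 * (nX * nY)) ≤ ξ * nY * (M ^ 2 * (nX * nY)) :=
    mul_le_mul_of_nonneg_right hpoor (by positivity)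
  rw [haa] at hsplit
  calc _ ≤ ∑ y, f y ^ 2 * twoEdgeWalks A y := sum_sq_sum_nbhd_le_sum_sq_mul_twoEdgeWalks A f
    _ ≤ _ := hsplit
    _ ≤ _ := by linarith

/-- Lemma 5.1 (the Cauchy–Schwarz lemma for ξ-poor bipartite graphs). -/
theorem stmt_0 {X Y : Type*} [Fintype X] [Fintype Y] [Nonempty X] [Nonempty Y]
    (A : X → Y → Prop) [∀ x, DecidablePred (A x)]
    (ξ M : ℝ) (hξ : 0 < ξ) (hM : 0 ≤ M)
    (f : Y → ℝ) (hf : ∀ y, f y ∈ Set.Icc (0 : ℝ) M)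
    (a : ℝ) (ha : 0 ≤ a)
    (haa : ∑ y : Y, (f y) ^ 2 = (Fintype.card Y : ℝ) * a ^ 2)
    -- `G` is ξ-poor: at most ξ|Y| vertices `y ∈ Y` admit more than (1/4+ξ)|X||Y|
    -- two-edge walks starting at `y`
    (hpoor :
      ((Finset.univ.filter (fun y : Y =>
          ((1/4 + ξ) * (Fintype.card X : ℝ) * (Fintype.card Y : ℝ)) <
            ∑ x ∈ Finset.univ.filter (fun x : X => A x y),
              ((Finset.univ.filter (fun y' : Y => A x y')).card : ℝ))).card : ℝ)
        ≤ ξ * (Fintype.card Y : ℝ)) :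
    ∑ x : X, (∑ y ∈ Finset.univ.filter (fun y : Y => A x y), f y) ^ 2
      ≤ ((1/4 + ξ) * a ^ 2 + ξ * M ^ 2) * (Fintype.card X : ℝ) *
          (Fintype.card Y : ℝ) ^ 2 :=
  stmt_0_general A ξ M hξ f hf a haa hpoor
end

section
/- For every real δ ∈ (0,1) and all integers m ≥ k ≥ 0 there exists a positive integer M such that the following holds: given finite nonempty sets A₁, …, A_M and subsets X_{ij} ⊆ A_i with |X_{ij}| ≥ δ·|A_i| for all 1 ≤ i < j ≤ M, there exist indices 1 ≤ n₁ < … < n_m ≤ M and elements a₁ ∈ A_{n₁}, …, a_k ∈ A_{n_k} such that for every i ∈ [k] and every j with i < j ≤ m one has a_i ∈ X_{n_i n_j}. -/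
/-- Auxiliary selection lemma over ℕ-indexed families, proved by induction on `k`. -/
lemma aux_sel (δ : ℝ) (hδ0 : 0 < δ) :
    ∀ k m : ℕ, k ≤ m → ∃ N : ℕ, 0 < N ∧
      ∀ (α : Type) (A : ℕ → Finset α) (X : ℕ → ℕ → Finset α) (S : Finset ℕ),
        N ≤ S.card →
        (∀ i ∈ S, (A i).Nonempty) →
        (∀ i ∈ S, ∀ j ∈ S, i < j →
          X i j ⊆ A i ∧ δ * ((A i).card : ℝ) ≤ ((X i j).card : ℝ)) →
        ∃ n : ℕ → ℕ, (∀ i < m, n i ∈ S) ∧ (∀ i j, i < j → j < m → n i < n j) ∧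
          ∃ a : ℕ → α, ∀ i < k, a i ∈ A (n i) ∧
            ∀ j, i < j → j < m → a i ∈ X (n i) (n j) := by
  intro k
  induction k with
  | zero =>
    intro m _
    refine ⟨max m 1, by positivity, ?_⟩
    intro α A X S hS hA _
    have hm : m ≤ S.card := le_trans (le_max_left m 1) hS
    have h1 : 1 ≤ S.card := le_trans (le_max_right m 1) hS
    have hSne : S.Nonempty := Finset.card_pos.mp h1
    obtain ⟨s₀, hs₀⟩ := hSne
    obtain ⟨x₀, _⟩ := hA s₀ hs₀
    set e := S.orderIsoOfFin rfl with he
    refine ⟨fun i => if h : i < S.card then (e ⟨i, h⟩ : ℕ) else 0, ?_, ?_, fun _ => x₀, ?_⟩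
    · intro i hi
      have h : i < S.card := lt_of_lt_of_le hi hm
      simp only [dif_pos h]
      exact (e ⟨i, h⟩).2
    · intro i j hij hj
      have hj' : j < S.card := lt_of_lt_of_le hj hm
      have hi' : i < S.card := lt_trans hij hj'
      simp only [dif_pos hi', dif_pos hj']
      exact_mod_cast e.strictMono (show (⟨i, hi'⟩ : Fin S.card) < ⟨j, hj'⟩ from hij)
    · intro i hi; exact absurd hi (Nat.not_lt_zero i)
  | succ k ih =>
    intro m hkm
    have hk : k ≤ m - 1 := by omega
    obtain ⟨N', hN'pos, hN'⟩ := ih (m - 1) hk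
    refine ⟨⌈(N' : ℝ) / δ⌉₊ + 1, by positivity, ?_⟩
    intro α A X S hS hA hX
    classical
    have hSne : S.Nonempty := Finset.card_pos.mp (by omega)
    set n₁ := S.min' hSne with hn₁
    have hn₁S : n₁ ∈ S := S.min'_mem hSne
    set T := S.erase n₁ with hT
    have hTcard : ⌈(N' : ℝ) / δ⌉₊ ≤ T.card := by
      have hTc : T.card = S.card - 1 := by
        rw [hT]; exact Finset.card_erase_of_mem hn₁S
      omega
    -- double counting to find a good element a₀ ∈ A n₁
    have hTsub : ∀ j ∈ T, n₁ < j := by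
      intro j hj
      have hjS : j ∈ S := Finset.mem_of_mem_erase hj
      have hne : j ≠ n₁ := Finset.ne_of_mem_erase hj
      exact lt_of_le_of_ne (S.min'_le j hjS) (Ne.symm hne)
    have hcount : δ * ((A n₁).card : ℝ) * T.card ≤
        ∑ a ∈ A n₁, ((T.filter fun j => a ∈ X n₁ j).card : ℝ) := by
      have hswap : ∑ a ∈ A n₁, ((T.filter fun j => a ∈ X n₁ j).card : ℝ)
          = ∑ j ∈ T, (((A n₁).filter fun a => a ∈ X n₁ j).card : ℝ) := by
        simp only [Finset.card_filter]
        push_cast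
        rw [Finset.sum_comm]
      rw [hswap]
      have hXA : ∀ j ∈ T, ((A n₁).filter fun a => a ∈ X n₁ j) = X n₁ j := by
        intro j hj
        have hsub := (hX n₁ hn₁S j (Finset.mem_of_mem_erase hj) (hTsub j hj)).1
        ext a
        simp only [Finset.mem_filter]
        exact ⟨fun h => h.2, fun h => ⟨hsub h, h⟩⟩
      calc δ * ((A n₁).card : ℝ) * T.card = ∑ _j ∈ T, δ * ((A n₁).card : ℝ) := by
            rw [Finset.sum_const, nsmul_eq_mul]; ring
        _ ≤ ∑ j ∈ T, (((A n₁).filter fun a => a ∈ X n₁ j).card : ℝ) := by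
            apply Finset.sum_le_sum
            intro j hj
            rw [hXA j hj]
            exact (hX n₁ hn₁S j (Finset.mem_of_mem_erase hj) (hTsub j hj)).2
    have hAne : (A n₁).Nonempty := hA n₁ hn₁S
    have hexists : ∃ a₀ ∈ A n₁,
        δ * (T.card : ℝ) ≤ ((T.filter fun j => a₀ ∈ X n₁ j).card : ℝ) := by
      by_contra hcon
      push_neg at hcon
      have hsum : ∑ a ∈ A n₁, ((T.filter fun j => a ∈ X n₁ j).card : ℝ)
          < ∑ _a ∈ A n₁, δ * (T.card : ℝ) :=
        Finset.sum_lt_sum_of_nonempty hAne fun a ha => hcon a ha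
      rw [Finset.sum_const, nsmul_eq_mul] at hsum
      have heq : δ * ((A n₁).card : ℝ) * T.card
          = ((A n₁).card : ℝ) * (δ * T.card) := by ring
      linarith [hcount]
    obtain ⟨a₀, ha₀A, ha₀⟩ := hexists
    set T' := T.filter fun j => a₀ ∈ X n₁ j with hT'
    have hT'card : N' ≤ T'.card := by
      have h1 : ((N' : ℝ) / δ) ≤ (⌈(N' : ℝ) / δ⌉₊ : ℝ) := Nat.le_ceil _
      have h2 : ((N' : ℝ) / δ) ≤ (T.card : ℝ) :=
        le_trans h1 (by exact_mod_cast hTcard)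
      have h3 : (N' : ℝ) ≤ δ * T.card := by
        rw [div_le_iff₀ hδ0] at h2; linarith
      have h4 : (N' : ℝ) ≤ (T'.card : ℝ) := le_trans h3 ha₀
      exact_mod_cast h4
    have hT'S : T' ⊆ S := le_trans (Finset.filter_subset _ _) (Finset.erase_subset _ _)
    obtain ⟨n', hn'S, hn'mono, a', ha'⟩ :=
      hN' α A X T' hT'card (fun i hi => hA i (hT'S hi))
        (fun i hi j hj hij => hX i (hT'S hi) j (hT'S hj) hij)
    refine ⟨fun t => if t = 0 then n₁ else n' (t - 1),
        ?_, ?_, fun t => if t = 0 then a₀ else a' (t - 1), ?_⟩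
    · intro i hi
      by_cases h : i = 0
      · simpa [h]
      · simp only [if_neg h]
        exact hT'S (hn'S (i - 1) (by omega))
    · intro i j hij hj
      have hjne : j ≠ 0 := by omega
      simp only [if_neg hjne]
      have hjm : j - 1 < m - 1 := by omega
      by_cases h : i = 0
      · simp only [h, if_pos rfl]
        have hmem := hn'S (j - 1) hjm
        rw [hT'] at hmem
        exact hTsub _ (Finset.mem_filter.mp hmem).1
      · simp only [if_neg h]
        exact hn'mono (i - 1) (j - 1) (by omega) hjm
    · intro i hi
      by_cases h : i = 0
      · subst h
        simp only [if_pos rfl]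
        refine ⟨ha₀A, ?_⟩
        intro j hj hjm
        have hjne : j ≠ 0 := by omega
        simp only [if_neg hjne]
        have hmem := hn'S (j - 1) (by omega)
        rw [hT'] at hmem
        exact (Finset.mem_filter.mp hmem).2
      · simp only [if_neg h]
        have hik : i - 1 < k := by omega
        obtain ⟨hmem, hXcond⟩ := ha' (i - 1) hik
        refine ⟨hmem, ?_⟩
        intro j hj hjm
        have hjne : j ≠ 0 := by omega
        simp only [if_neg hjne]
        exact hXcond (j - 1) (by omega) (by omega)

/-- Lemma 6.1 (the selection lemma used in the proof of the triangle lemma). -/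
theorem stmt_4 (δ : ℝ) (hδ : δ ∈ Set.Ioo (0 : ℝ) 1) (k m : ℕ) (hkm : k ≤ m) :
    ∃ M : ℕ, 0 < M ∧
      ∀ (α : Type) (A : Fin M → Finset α),
        (∀ i, (A i).Nonempty) →
        ∀ Xs : Fin M → Fin M → Finset α,
          (∀ i j : Fin M, i < j →
            Xs i j ⊆ A i ∧ δ * ((A i).card : ℝ) ≤ ((Xs i j).card : ℝ)) →
          ∃ n : Fin m → Fin M, StrictMono n ∧
            ∃ a : Fin k → α, ∀ i : Fin k,
              a i ∈ A (n (Fin.castLE hkm i)) ∧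
              ∀ j : Fin m, Fin.castLE hkm i < j →
                a i ∈ Xs (n (Fin.castLE hkm i)) (n j) := by
  obtain ⟨hδ0, hδ1⟩ := hδ
  obtain ⟨N, hNpos, hN⟩ := aux_sel δ hδ0 k m hkm
  refine ⟨N, hNpos, ?_⟩
  intro α A hA Xs hXs
  classical
  set A' : ℕ → Finset α := fun i => if h : i < N then A ⟨i, h⟩ else ∅ with hA'
  set X' : ℕ → ℕ → Finset α := fun i j =>
    if h : i < N ∧ j < N then Xs ⟨i, h.1⟩ ⟨j, h.2⟩ else ∅ with hX'
  have hScard : N ≤ (Finset.range N).card := by simp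
  obtain ⟨n, hnS, hnmono, a, ha⟩ := hN α A' X' (Finset.range N) hScard
    (by
      intro i hi
      rw [Finset.mem_range] at hi
      simpa [hA', dif_pos hi] using hA ⟨i, hi⟩)
    (by
      intro i hi j hj hij
      rw [Finset.mem_range] at hi hj
      have := hXs ⟨i, hi⟩ ⟨j, hj⟩ (by exact hij)
      simpa [hA', hX', dif_pos hi, dif_pos (And.intro hi hj)] using this)
  have hnlt : ∀ i < m, n i < N := by
    intro i hi; exact Finset.mem_range.mp (hnS i hi)
  refine ⟨fun i => ⟨n i, hnlt i i.2⟩, ?_, fun i => a i, ?_⟩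
  · intro i j hij
    exact hnmono i j hij j.2
  · intro i
    have hik : (i : ℕ) < k := i.2
    have him : (i : ℕ) < m := lt_of_lt_of_le hik hkm
    obtain ⟨hmem, hXcond⟩ := ha i hik
    constructor
    · have : A' (n i) = A ⟨n i, hnlt i him⟩ := by
        simp [hA', dif_pos (hnlt i him)]
      rwa [this] at hmem
    · intro j hj
      have hjlt : (i : ℕ) < (j : ℕ) := hj
      have := hXcond j hjlt j.2
      have heq : X' (n i) (n j) = Xs ⟨n i, hnlt i him⟩ ⟨n j, hnlt j j.2⟩ := by
        simp [hX', dif_pos (And.intro (hnlt i him) (hnlt j j.2))]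
      rwa [heq] at this
end

section
/- For every k ≥ 3, the hypergraph H(T) associated with any (k-1)-uniform tournament T on [n] contains no copy of F^{(k)}, the k-uniform hypergraph with k+1 vertices and three edges. Concretely: there do not exist a (k-2)-set w ⊆ [n] and three distinct vertices a, b, c ∉ w such that w∪{a,b}, w∪{a,c}, and w∪{b,c} are all edges of H(T). -/
/-- An orientation of a finite set `X ⊆ ℕ` is encoded, relative to the increasing
enumeration, by an element of `ZMod 2` (0 = the increasing enumeration with sign `+`).
The orientation of `X ∖ {x}` induced by an orientation `σ` of `X` is obtained by
moving `x` to the last position (costing `|X| - 1 - (index of x)` transpositions)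
and deleting it. -/
def inducedOrientation (X : Finset ℕ) (x : ℕ) (σ : ZMod 2) : ZMod 2 :=
  σ + ((X.card - 1 - (X.filter (· < x)).card : ℕ) : ZMod 2)

/-- A `(k-1)`-uniform tournament assigns an orientation `T y ∈ ZMod 2` to every
`(k-1)`-set `y`; a `k`-set `e` is an edge of the associated hypergraph `H(T)` iff
some orientation of `e` induces on every `(k-1)`-subset of `e` the orientation
given by `T`. -/
def isEdge (T : Finset ℕ → ZMod 2) (e : Finset ℕ) : Prop :=
  ∃ σ : ZMod 2, ∀ x ∈ e, inducedOrientation e x σ = T (e.erase x)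

lemma filter_insert_card (w : Finset ℕ) (a b : ℕ) (hb : b ∉ w) :
    ((insert b w).filter (· < a)).card
      = (w.filter (· < a)).card + (if b < a then 1 else 0) := by
  rw [Finset.filter_insert]
  split
  · rw [Finset.card_insert_of_notMem (fun h => hb (Finset.mem_filter.mp h).1)]
  · simp

lemma key (T : Finset ℕ → ZMod 2) (w : Finset ℕ) (a b : ℕ)
    (ha : a ∉ w) (hb : b ∉ w) (hab : a ≠ b)
    (h : isEdge T (insert a (insert b w))) :
    T (insert a w) + T (insert b w)
      = (((w.filter (· < a)).card + (w.filter (· < b)).card + 1 : ℕ) : ZMod 2) := by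
  obtain ⟨σ, h⟩ := h
  have habw : a ∉ insert b w := by simp [hab, ha]
  have ea := h a (by simp)
  have eb := h b (by simp)
  rw [Finset.erase_insert habw] at ea
  have heb : (insert a (insert b w)).erase b = insert a w := by
    rw [Finset.insert_comm]; exact Finset.erase_insert (by simp [Ne.symm hab, hb])
  rw [heb] at eb
  unfold inducedOrientation at ea eb
  have hcard : (insert a (insert b w)).card = w.card + 2 := by
    rw [Finset.card_insert_of_notMem habw, Finset.card_insert_of_notMem hb]
  have hfa : ((insert a (insert b w)).filter (· < a)).card
      = (w.filter (· < a)).card + (if b < a then 1 else 0) := by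
    rw [Finset.filter_insert]
    simp only [lt_irrefl, if_false]
    exact filter_insert_card w a b hb
  have hfb : ((insert a (insert b w)).filter (· < b)).card
      = (w.filter (· < b)).card + (if a < b then 1 else 0) := by
    rw [Finset.insert_comm, Finset.filter_insert]
    simp only [lt_irrefl, if_false]
    exact filter_insert_card w b a ha
  rw [hcard, hfa] at ea
  rw [hcard, hfb] at eb
  have hfa' : (w.filter (· < a)).card ≤ w.card := Finset.card_filter_le _ _
  have hfb' : (w.filter (· < b)).card ≤ w.card := Finset.card_filter_le _ _
  have h2 : ∀ x : ZMod 2, x + x = 0 := by decide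
  rw [← ea, ← eb]
  have hcast : ((w.card + 2 - 1 - ((w.filter (· < b)).card + if a < b then 1 else 0) : ℕ) : ZMod 2)
      + ((w.card + 2 - 1 - ((w.filter (· < a)).card + if b < a then 1 else 0) : ℕ) : ZMod 2)
      = (((w.filter (· < a)).card + (w.filter (· < b)).card + 1 : ℕ) : ZMod 2) := by
    rw [← Nat.cast_add, ZMod.natCast_eq_natCast_iff, Nat.ModEq]
    rcases Nat.lt_or_ge a b with hlt | hge
    · have : ¬ b < a := by omega
      simp only [hlt, this, if_true, if_false]
      omega
    · have hlt : b < a := lt_of_le_of_ne hge (Ne.symm hab)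
      have : ¬ a < b := by omega
      simp only [hlt, this, if_true, if_false]
      omega
  rw [← hcast]
  linear_combination h2 σ

/-- Fact 1.4 for `k ≥ 3`: the hypergraph `H(T)` associated with a `(k-1)`-uniform
tournament `T` on `[n]` contains no `F^{(k)}`: there is no `(k-2)`-set `w` and
distinct `a, b, c ∉ w` with `w ∪ {a,b}`, `w ∪ {a,c}`, `w ∪ {b,c}` all edges. -/
theorem stmt_11 (k : ℕ) (hk : 3 ≤ k) (n : ℕ) (T : Finset ℕ → ZMod 2)
    (w : Finset ℕ) (hw : w ⊆ Finset.range n) (hwc : w.card = k - 2)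
    (a b c : ℕ) (han : a ∈ Finset.range n) (hbn : b ∈ Finset.range n)
    (hcn : c ∈ Finset.range n)
    (ha : a ∉ w) (hb : b ∉ w) (hc : c ∉ w)
    (hab : a ≠ b) (hac : a ≠ c) (hbc : b ≠ c) :
    ¬ (isEdge T (insert a (insert b w)) ∧ isEdge T (insert a (insert c w)) ∧
        isEdge T (insert b (insert c w))) := by
  rintro ⟨h1, h2, h3⟩
  have k1 := key T w a b ha hb hab h1
  have k2 := key T w a c ha hc hac h2
  have k3 := key T w b c hb hc hbc h3
  push_cast at k1 k2 k3
  have htwo : (2 : ZMod 2) = 0 := by decide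
  have : (0 : ZMod 2) = 1 := by
    linear_combination k1 - k2 + k3 - (T (insert b w) - ((w.filter (· < b)).card : ZMod 2)) * htwo
  exact absurd this (by decide)
end

section
/- Let t ≥ k ≥ 2 and let φ : [n]^{(k-1)} → [t-k+1] be any colouring. Define the k-uniform hypergraph R(φ) on [n] whose edges are the k-sets {v₁ < … < v_k} with φ({v₂,…,v_k}) ≠ φ({v₁, v₃,…,v_k}). Then R(φ) contains no clique on t vertices. -/
/-!
Take the `k - 2` largest vertices `z` of a would-be clique `S`. The remaining `t - k + 2`
vertices all lie below `z` and receive the colours `φ (insert x z)` from only `t - k + 1`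
colours, so two of them `a < b` share a colour. But then `a` and `b` are the two smallest
elements of the `k`-set `{a, b} ∪ z`, and it is not an edge.
-/

namespace Finset

variable {α : Type*} [LinearOrder α]

theorem exists_top_subset_card_eq (s : Finset α) {r : ℕ} (hr : r ≤ s.card) :
    ∃ z ⊆ s, z.card = r ∧ ∀ x ∈ s \ z, ∀ y ∈ z, x < y := by
  induction r generalizing s with
  | zero => exact ⟨∅, empty_subset s, card_empty, by simp⟩
  | succ r ih =>
    have hs : s.Nonempty := card_pos.mp (by omega)
    obtain ⟨z, hzs, hz, hlt⟩ :=
      ih (s.erase (s.max' hs)) (by rw [card_erase_of_mem (s.max'_mem hs)]; omega)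
    have hmax : s.max' hs ∉ z := fun h => by simpa using hzs h
    refine ⟨insert (s.max' hs) z, insert_subset (s.max'_mem hs) (hzs.trans (erase_subset _ _)),
      by rw [card_insert_of_notMem hmax, hz], ?_⟩
    intro x hx y hy
    rw [mem_sdiff, mem_insert, not_or] at hx
    obtain ⟨hxs, hxmax, hxz⟩ := hx
    rcases mem_insert.mp hy with rfl | hy
    · exact lt_of_le_of_ne (s.le_max' x hxs) hxmax
    · exact hlt x (mem_sdiff.mpr ⟨mem_erase.mpr ⟨hxmax, hxs⟩, hxz⟩) y hy

theorem exists_lt_map_eq_of_card_lt {β : Type*} [Fintype β] {s : Finset α} (f : α → β)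
    (hs : Fintype.card β < s.card) : ∃ a ∈ s, ∃ b ∈ s, a < b ∧ f a = f b := by
  obtain ⟨a, ha, b, hb, hab, hf⟩ :=
    exists_ne_map_eq_of_card_lt_of_maps_to (t := univ) (by simpa using hs)
      (fun x _ => mem_univ (f x))
  rcases hab.lt_or_gt with hab | hba
  · exact ⟨a, ha, b, hb, hab, hf⟩
  · exact ⟨b, hb, a, ha, hba, hf.symm⟩

theorem eq_of_two_smallest_mem_insert_insert {a b v₁ v₂ : α} {z : Finset α} (hab : a < b)
    (hbz : ∀ y ∈ z, b < y) (hv₁ : v₁ ∈ insert a (insert b z)) (hv₂ : v₂ ∈ insert a (insert b z))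
    (h12 : v₁ < v₂) (hv₁_le : ∀ u ∈ insert a (insert b z), v₁ ≤ u)
    (hv₂_le : ∀ u ∈ insert a (insert b z), u ≠ v₁ → v₂ ≤ u) : v₁ = a ∧ v₂ = b := by
  have ha_le : ∀ u ∈ insert a (insert b z), a ≤ u := by
    simp only [mem_insert, forall_eq_or_imp]
    exact ⟨le_rfl, hab.le, fun y hy => (hab.trans (hbz y hy)).le⟩
  have h₁ : v₁ = a := le_antisymm (hv₁_le a (mem_insert_self _ _)) (ha_le v₁ hv₁)
  subst h₁
  refine ⟨rfl, le_antisymm (hv₂_le b (by simp) hab.ne') ?_⟩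
  rcases mem_insert.mp hv₂ with rfl | hv₂
  · exact absurd h12 (lt_irrefl _)
  rcases mem_insert.mp hv₂ with rfl | hv₂
  · exact le_rfl
  · exact (hbz v₂ hv₂).le

end Finset

/-- Fact 7.3 (freeness of the construction `R(φ)`): for `t ≥ k ≥ 2` and any colouring
`φ` of the `(k-1)`-subsets with `t-k+1` colours, the `k`-uniform hypergraph whose
edges are the `k`-sets `{v₁ < v₂ < …}` with `φ(e ∖ {v₁}) ≠ φ(e ∖ {v₂})` (here `v₁, v₂`
are the two smallest elements of `e`) contains no clique on `t` vertices. -/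
theorem stmt_17 (k t : ℕ) (hk : 2 ≤ k) (hkt : k ≤ t)
    (φ : Finset ℕ → Fin (t - k + 1)) :
    ¬ ∃ S : Finset ℕ, S.card = t ∧
        ∀ e ∈ Finset.powersetCard k S,
          ∃ v₁ ∈ e, ∃ v₂ ∈ e, v₁ < v₂ ∧ (∀ u ∈ e, v₁ ≤ u) ∧
            (∀ u ∈ e, u ≠ v₁ → v₂ ≤ u) ∧ φ (e.erase v₁) ≠ φ (e.erase v₂) := by
  rintro ⟨S, hS, hclique⟩
  obtain ⟨z, hzS, hz, hlt⟩ := S.exists_top_subset_card_eq (r := k - 2) (by omega)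
  obtain ⟨a, ha, b, hb, hab, hφ⟩ := Finset.exists_lt_map_eq_of_card_lt (fun x => φ (insert x z))
    (s := S \ z) (by rw [Finset.card_sdiff_of_subset hzS, Fintype.card_fin]; omega)
  have hbz : b ∉ z := (Finset.mem_sdiff.mp hb).2
  have haz : a ∉ insert b z := by simpa [hab.ne] using (Finset.mem_sdiff.mp ha).2
  have he : insert a (insert b z) ∈ Finset.powersetCard k S := by
    refine Finset.mem_powersetCard.mpr ⟨?_, ?_⟩
    · exact Finset.insert_subset (Finset.mem_sdiff.mp ha).1
        (Finset.insert_subset (Finset.mem_sdiff.mp hb).1 hzS)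
    · rw [Finset.card_insert_of_notMem haz, Finset.card_insert_of_notMem hbz, hz]
      omega
  obtain ⟨v₁, hv₁, v₂, hv₂, h12, hv₁_le, hv₂_le, hne⟩ := hclique _ he
  obtain ⟨rfl, rfl⟩ := Finset.eq_of_two_smallest_mem_insert_insert hab (hlt b hb) hv₁ hv₂ h12
    hv₁_le hv₂_le
  rw [Finset.erase_insert haz, Finset.erase_insert_of_ne h12.ne, Finset.erase_insert hbz] at hne
  exact hne hφ.symm
end

section
/- Let r ≥ 3 and k ≥ 2 with r ≤ k+1, and let γ : [n]^{(k-1)} → {red, green} be any 2-colouring. Define the k-uniform hypergraph H_r(γ) on [n] whose edges are those k-sets {x₁ < … < x_k} satisfying γ(x∖{x₁}) ≠ γ(x∖{x₂}) ≠ … ≠ γ(x∖{x_{k+3-r}}) (consecutive colours alternate along the first k+3-r links). Then H_r(γ) contains no copy of F_r^{(k)}, the k-uniform hypergraph with k+1 vertices and r edges. -/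
/-!
List the `k + 1` vertices of a putative copy `S` increasingly; every edge is `S` minus its
`t`-th vertex, and `F a b := γ (S ∖ {v_a, v_b})` is symmetric in `a, b`. With `M = k + 2 - r`,
the edge condition for the edge missing `v_t` says that `F t j` alternates along the first
`M + 1` indices `j ≠ t`, which forces `F t j = z_t ⊕ [t < j] ⊕ parity j` for `j ≤ M + 1`.
Symmetry of `F` then makes `z_a ⊕ parity a` and `z_b ⊕ parity b` differ for any two such
indices `a ≠ b ≤ M + 1`. Only `k - (M + 1) = r - 3` edges can miss a vertex of index `> M + 1`,
so three of the `r` edges give three pairwise different Booleans, which is absurd.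
-/

open Finset

/-- The `ℕ`-analogue of `Fin.succAbove`: the position in a list of the `i`-th entry that
survives erasing position `t`. -/
def skipAt (t i : ℕ) : ℕ := if i < t then i else i + 1

lemma List.getD_eraseIdx {α : Type*} (l : List α) (t i : ℕ) (d : α) :
    (l.eraseIdx t).getD i d = l.getD (skipAt t i) d := by
  simp only [List.getD_eq_getElem?_getD, List.getElem?_eraseIdx, skipAt]
  split_ifs <;> rfl

lemma Finset.sort_erase_getD {α : Type*} [LinearOrder α] (s : Finset α) {t : ℕ} (ht : t < #s)
    (d : α) :
    (s.erase ((s.sort (· ≤ ·)).getD t d)).sort (· ≤ ·) = (s.sort (· ≤ ·)).eraseIdx t := by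
  have ht' : t < (s.sort (· ≤ ·)).length := by rwa [length_sort]
  rw [List.getD_eq_getElem?_getD, List.getElem?_eq_getElem ht', Option.getD_some,
    ← (sort_nodup s _).erase_getElem t ht']
  refine List.Perm.eq_of_pairwise' (r := (· ≤ ·)) (pairwise_sort _ _)
    ((pairwise_sort _ _).sublist List.erase_sublist) ?_
  rw [← Multiset.coe_eq_coe, ← Multiset.coe_erase, sort_eq, sort_eq, erase_val]

lemma Finset.exists_eq_erase_sort_getD {α : Type*} [LinearOrder α] {e s : Finset α}
    (hes : e ⊆ s) (hcard : #e + 1 = #s) (d : α) :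
    ∃ t < #s, e = s.erase ((s.sort (· ≤ ·)).getD t d) := by
  obtain ⟨v, hv, hev⟩ := ssubset_iff_exists_subset_erase.1
    (ssubset_of_subset_of_ne hes (by rintro rfl; omega))
  have hve : e = s.erase v :=
    eq_of_subset_of_card_le hev (by rw [card_erase_of_mem hv]; omega)
  obtain ⟨t, ht, rfl⟩ := List.mem_iff_getElem.1 ((mem_sort (· ≤ ·)).2 hv)
  refine ⟨t, by rwa [length_sort] at ht, ?_⟩
  rw [List.getD_eq_getElem?_getD, List.getElem?_eq_getElem ht, Option.getD_some, hve]

lemma Finset.card_le_card_filter_lt_add {T : Finset ℕ} {n : ℕ} (hT : T ⊆ range n) (m : ℕ) :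
    #T ≤ #(T.filter (· < m)) + (n - m) := by
  rw [← card_filter_add_card_filter_not (p := (· < m))]
  gcongr
  calc #(T.filter (¬ · < m)) ≤ #(Ico m n) := card_le_card fun x hx => by
        simp only [mem_filter, not_lt] at hx
        simpa [hx.2] using hT hx.1
    _ = n - m := Nat.card_Ico m n

lemma Bool.eq_xor_bodd_of_ne_succ {B : ℕ → Bool} {M : ℕ} (h : ∀ i < M, B i ≠ B (i + 1))
    {i : ℕ} (hi : i ≤ M) : B i = (B 0 ^^ i.bodd) := by
  induction i with
  | zero => simp
  | succ i ih =>
    rw [Nat.bodd_succ, Bool.eq_not_of_ne (h i (by omega)).symm, ih (by omega)]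
    cases B 0 <;> cases i.bodd <;> rfl

lemma skipAt_of_lt {t i : ℕ} (h : i < t) : skipAt t i = i := if_pos h

lemma skipAt_of_le {t i : ℕ} (h : t ≤ i) : skipAt t i = i + 1 := if_neg h.not_gt

/-- The edge condition of `H_r(γ)` for the edge missing the `t`-th vertex, where `F a b` is the
colour of the `(k-1)`-set missing the `a`-th and `b`-th vertices. -/
def IsAlternatingAt (F : ℕ → ℕ → Bool) (M t : ℕ) : Prop :=
  ∀ i < M, F t (skipAt t i) ≠ F t (skipAt t (i + 1))

section
variable {F : ℕ → ℕ → Bool} {M : ℕ}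

lemma IsAlternatingAt.apply_xor_bodd {t : ℕ} (h : IsAlternatingAt F M t) (ht : t ≤ M + 1)
    {j : ℕ} (hjt : j ≠ t) (hj : j ≤ M + 1) :
    (F t j ^^ j.bodd) = (F t (skipAt t 0) ^^ decide (t < j)) := by
  rcases lt_or_gt_of_ne hjt with hlt | hgt
  · have hFj : F t j = (F t (skipAt t 0) ^^ j.bodd) := by
      simpa only [skipAt_of_lt hlt] using
        Bool.eq_xor_bodd_of_ne_succ (B := fun i => F t (skipAt t i)) h (i := j) (by omega)
    simp [hFj, hlt.not_gt]
  · obtain ⟨i, rfl⟩ : ∃ i, j = i + 1 := ⟨j - 1, by omega⟩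
    have hFj : F t (i + 1) = (F t (skipAt t 0) ^^ i.bodd) := by
      simpa only [skipAt_of_le (Nat.le_of_lt_succ hgt)] using
        Bool.eq_xor_bodd_of_ne_succ (B := fun i => F t (skipAt t i)) h (i := i) (by omega)
    simp [hFj, hgt]

lemma IsAlternatingAt.xor_bodd_ne (hF : ∀ a b, F a b = F b a) {a b : ℕ}
    (ha : IsAlternatingAt F M a) (hb : IsAlternatingAt F M b) (hab : a ≠ b)
    (haM : a ≤ M + 1) (hbM : b ≤ M + 1) :
    (F a (skipAt a 0) ^^ a.bodd) ≠ (F b (skipAt b 0) ^^ b.bodd) := by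
  wlog hlt : a < b generalizing a b
  · exact (this hb ha hab.symm hbM haM (by omega)).symm
  have hab' := ha.apply_xor_bodd haM hab.symm hbM
  have hba := hb.apply_xor_bodd hbM hab haM
  rw [decide_eq_true hlt] at hab'
  rw [decide_eq_false (by omega), hF b a] at hba
  revert hab' hba
  cases F a b <;> cases F a (skipAt a 0) <;> cases F b (skipAt b 0) <;>
    cases a.bodd <;> cases b.bodd <;> decide

lemma not_isAlternatingAt_three (hF : ∀ a b, F a b = F b a) {a b c : ℕ}
    (ha : IsAlternatingAt F M a) (hb : IsAlternatingAt F M b) (hc : IsAlternatingAt F M c)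
    (hab : a ≠ b) (hac : a ≠ c) (hbc : b ≠ c)
    (haM : a ≤ M + 1) (hbM : b ≤ M + 1) (hcM : c ≤ M + 1) : False := by
  have h1 := ha.xor_bodd_ne hF hb hab haM hbM
  have h2 := ha.xor_bodd_ne hF hc hac haM hcM
  have h3 := hb.xor_bodd_ne hF hc hbc hbM hcM
  revert h1 h2 h3
  cases (F a (skipAt a 0) ^^ a.bodd) <;> cases (F b (skipAt b 0) ^^ b.bodd) <;>
    cases (F c (skipAt c 0) ^^ c.bodd) <;> decide
end

theorem stmt_18_general (k r : ℕ) (hr : 3 ≤ r) (hrk : r ≤ k + 1)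
    (γ : Finset ℕ → Bool) :
    ¬ ∃ S : Finset ℕ, S.card = k + 1 ∧
        ∃ Y : Finset (Finset ℕ), Y ⊆ Finset.powersetCard k S ∧ r ≤ Y.card ∧
          ∀ e ∈ Y, ∀ i : ℕ, i + 1 ≤ k + 2 - r →
            γ (e.erase ((e.sort (· ≤ ·)).getD i 0)) ≠
              γ (e.erase ((e.sort (· ≤ ·)).getD (i + 1) 0)) := by
  rintro ⟨S, hS, Y, hYS, hYcard, hY⟩
  set L := S.sort (· ≤ ·)
  set F : ℕ → ℕ → Bool := fun a b => γ ((S.erase (L.getD a 0)).erase (L.getD b 0))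
  have hF : ∀ a b, F a b = F b a := fun a b => by simp only [F, erase_right_comm]
  set T := (range (k + 1)).filter fun t => S.erase (L.getD t 0) ∈ Y
  have hYT : Y ⊆ T.image fun t => S.erase (L.getD t 0) := fun e he => by
    obtain ⟨hes, hek⟩ := mem_powersetCard.1 (hYS he)
    obtain ⟨t, ht, rfl⟩ := exists_eq_erase_sort_getD hes (by omega) 0
    exact mem_image.2 ⟨t, mem_filter.2 ⟨mem_range.2 (hS ▸ ht), he⟩, rfl⟩
  have halt : ∀ t ∈ T, IsAlternatingAt F (k + 2 - r) t := fun t ht i hi => by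
    obtain ⟨htk, he⟩ := mem_filter.1 ht
    have := hY _ he i (by omega)
    rwa [sort_erase_getD S (hS ▸ mem_range.1 htk), List.getD_eraseIdx,
      List.getD_eraseIdx] at this
  have hlow : 2 < #(T.filter (· < k + 4 - r)) := by
    have := card_le_card_filter_lt_add (T := T) (filter_subset _ _) (k + 4 - r)
    have := (card_le_card hYT).trans card_image_le
    omega
  obtain ⟨a, ha, b, hb, c, hc, hab, hac, hbc⟩ := two_lt_card.1 hlow
  simp only [mem_filter] at ha hb hc
  exact not_isAlternatingAt_three hF (halt a ha.1) (halt b hb.1) (halt c hc.1) hab hac hbc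
    (by omega) (by omega) (by omega)

/-- Freeness claim in the proof of Fact 7.2: for `3 ≤ r ≤ k+1` and any 2-colouring `γ`
of `(k-1)`-sets, the `k`-uniform hypergraph `H_r(γ)` — whose edges are the `k`-sets
`{x₁ < … < x_k}` with `γ(x∖{x₁}) ≠ γ(x∖{x₂}) ≠ … ≠ γ(x∖{x_{k+3-r}})` — contains no
copy of `F_r^{(k)}`, the `k`-uniform hypergraph with `k+1` vertices and `r` edges.
(Here `(e.sort (· ≤ ·)).getD i 0` is the `(i+1)`-st smallest element of `e`.) -/
theorem stmt_18 (k r : ℕ) (hk : 2 ≤ k) (hr : 3 ≤ r) (hrk : r ≤ k + 1)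
    (γ : Finset ℕ → Bool) :
    ¬ ∃ S : Finset ℕ, S.card = k + 1 ∧
        ∃ Y : Finset (Finset ℕ), Y ⊆ Finset.powersetCard k S ∧ r ≤ Y.card ∧
          ∀ e ∈ Y, ∀ i : ℕ, i + 1 ≤ k + 2 - r →
            γ (e.erase ((e.sort (· ≤ ·)).getD i 0)) ≠
              γ (e.erase ((e.sort (· ≤ ·)).getD (i + 1) 0)) :=
  stmt_18_general k r hr hrk γ
end
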